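/- Let X and Y be random variables on finite sets with |X| ≥ 4, and let d = SD(X|Y; X). Then I(X; Y) ≤ d · log(|X| / d) (with the convention that the bound is 0 when d = 0). -/

import Mathlib

open Finset

/-- A probability mass function on a finite sample space. -/
def IsPMF {Ω : Type} [Fintype Ω] (μ : Ω → ℝ) : Prop :=
  (∀ ω, 0 ≤ μ ω) ∧ ∑ ω, μ ω = 1

/-- Distribution of random variable `X` under `μ`. -/
noncomputable def distr {Ω α : Type} [Fintype Ω] [DecidableEq α]
    (μ : Ω → ℝ) (X : Ω → α) (x : α) : ℝ :=
  ∑ ω, if X ω = x then μ ω else 0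

/-- Shannon entropy (in bits) of random variable `X` under `μ`. -/
noncomputable def ent {Ω α : Type} [Fintype Ω] [Fintype α] [DecidableEq α]
    (μ : Ω → ℝ) (X : Ω → α) : ℝ :=
  - ∑ x, distr μ X x * Real.logb 2 (distr μ X x)

/-- Mutual information `I(X;Y)` (in bits). -/
noncomputable def mi {Ω α β : Type} [Fintype Ω] [Fintype α] [DecidableEq α]
    [Fintype β] [DecidableEq β] (μ : Ω → ℝ) (X : Ω → α) (Y : Ω → β) : ℝ :=
  ent μ X + ent μ Y - ent μ (fun ω => (X ω, Y ω))

/-- Conditional mutual information `I(X;Y|Z)` (in bits). -/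
noncomputable def cmi {Ω α β γ : Type} [Fintype Ω] [Fintype α] [DecidableEq α]
    [Fintype β] [DecidableEq β] [Fintype γ] [DecidableEq γ]
    (μ : Ω → ℝ) (X : Ω → α) (Y : Ω → β) (Z : Ω → γ) : ℝ :=
  ent μ (fun ω => (X ω, Z ω)) + ent μ (fun ω => (Y ω, Z ω))
    - ent μ (fun ω => (X ω, Y ω, Z ω)) - ent μ Z

/-- `X → Y → Z` forms a Markov chain under `μ`. -/
def Markov {Ω α β γ : Type} [Fintype Ω] [DecidableEq α] [DecidableEq β] [DecidableEq γ]
    (μ : Ω → ℝ) (X : Ω → α) (Y : Ω → β) (Z : Ω → γ) : Prop :=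
  ∀ x y z,
    distr μ (fun ω => (X ω, Y ω, Z ω)) (x, y, z) * distr μ Y y =
    distr μ (fun ω => (X ω, Y ω)) (x, y) * distr μ (fun ω => (Y ω, Z ω)) (y, z)

/-- `X` and `Y` are independent under `μ`. -/
def Indep {Ω α β : Type} [Fintype Ω] [DecidableEq α] [DecidableEq β]
    (μ : Ω → ℝ) (X : Ω → α) (Y : Ω → β) : Prop :=
  ∀ x y, distr μ (fun ω => (X ω, Y ω)) (x, y) = distr μ X x * distr μ Y y

/-- Conditional distribution `P(x | Y = y)`. -/
noncomputable def condDistr {Ω α β : Type} [Fintype Ω] [DecidableEq α] [DecidableEq β]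
    (μ : Ω → ℝ) (X : Ω → α) (Y : Ω → β) (x : α) (y : β) : ℝ :=
  if distr μ Y y = 0 then 0
  else distr μ (fun ω => (X ω, Y ω)) (x, y) / distr μ Y y

/-- Conditional statistical distance `SD(X|Y ; X)`. -/
noncomputable def sdCond {Ω α β : Type} [Fintype Ω] [Fintype α] [DecidableEq α]
    [Fintype β] [DecidableEq β] (μ : Ω → ℝ) (X : Ω → α) (Y : Ω → β) : ℝ :=
  ∑ y, distr μ Y y * ∑ x, |condDistr μ X Y x y - distr μ X x|

/-- The conditional PMF on `Ω` given the event `X = x`. -/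
noncomputable def condPMF {Ω α : Type} [Fintype Ω] [DecidableEq α]
    (μ : Ω → ℝ) (X : Ω → α) (x : α) : Ω → ℝ :=
  fun ω => if X ω = x then μ ω / distr μ X x else 0

open Real

/-! Write `η = negMulLog` and `m = |𝒳|`. In nats, `I(X;Y) = ∑_y P(y) (H(P_X) - H(P_{X|y}))`, and
`θ_y = ‖P_{X|y} - P_X‖₁` averages to `d`. A continuity bound `H(Q) - H(P) ≤ θ log m + η θ` for
`θ = ‖P - Q‖₁` holds coordinatewise when `θ ≤ 1`: then every `|P x - Q x| ≤ θ / 2 ≤ 1 / 2`, where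
`η q - η p ≤ η |p - q|`, and Jensen for `η` sums these up. For `1 < θ ≤ 2` it follows from
`H ≤ log m`, because the concave bound is at least `log m` at `θ = 1` and, as `m ≥ 4`, at `θ = 2`.
Jensen over `y` for the concave `t ↦ t log m + η t` then gives
`I(X;Y) ≤ d log m + η d = d log (m / d)`.
-/

lemma ConcaveOn.map_add_sub_map_le_of_le {𝕜 : Type*} [Field 𝕜] [LinearOrder 𝕜]
    [IsStrictOrderedRing 𝕜] {s : Set 𝕜} {f : 𝕜 → 𝕜} (hf : ConcaveOn 𝕜 s f) {x y δ : 𝕜}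
    (hx : x ∈ s) (hyδ : y + δ ∈ s) (hxy : x ≤ y) (hδ : 0 ≤ δ) :
    f (y + δ) - f y ≤ f (x + δ) - f x := by
  rcases (add_nonneg (sub_nonneg.2 hxy) hδ).eq_or_lt with hL | hL
  · obtain rfl : δ = 0 := by linarith
    obtain rfl : y = x := by linarith
    simp
  set L := y - x + δ
  have hsum : δ / L + (y - x) / L = 1 := by field_simp; ring
  have hy := hf.2 hx hyδ (div_nonneg hδ hL.le) (div_nonneg (sub_nonneg.2 hxy) hL.le) hsum
  have hxδ := hf.2 hx hyδ (div_nonneg (sub_nonneg.2 hxy) hL.le) (div_nonneg hδ hL.le)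
    (by rw [add_comm, hsum])
  have hy_eq : (δ / L) • x + ((y - x) / L) • (y + δ) = y := by
    simp only [smul_eq_mul]; field_simp; ring
  have hxδ_eq : ((y - x) / L) • x + (δ / L) • (y + δ) = x + δ := by
    simp only [smul_eq_mul]; field_simp; ring
  rw [hy_eq] at hy
  rw [hxδ_eq] at hxδ
  simp only [smul_eq_mul] at hy hxδ
  linear_combination hy + hxδ - (f x + f (y + δ)) * hsum

lemma negMulLog_one_sub_le {s : ℝ} (hs : 0 ≤ s) (hs2 : s ≤ 1 / 2) :
    negMulLog (1 - s) ≤ negMulLog s := by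
  rcases hs.eq_or_lt with rfl | hs
  · simp
  have h1s : 0 < 1 - s := by linarith
  have key := strictConcaveOn_log_Ioi.concaveOn.2 (Set.mem_Ioi.2 hs) (Set.mem_Ioi.2 one_pos)
    (div_nonneg hs.le h1s.le) (by rw [sub_nonneg, div_le_one h1s]; linarith : 0 ≤ 1 - s / (1 - s))
    (add_sub_cancel _ _)
  have hpt : (s / (1 - s)) • s + (1 - s / (1 - s)) • (1 : ℝ) = 1 - s := by
    simp only [smul_eq_mul]; field_simp; ring
  rw [hpt] at key
  simp only [smul_eq_mul, log_one, mul_zero, add_zero] at key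
  have := mul_le_mul_of_nonneg_left key h1s.le
  rw [← mul_assoc, mul_div_cancel₀ _ h1s.ne'] at this
  simp only [negMulLog]
  linarith

lemma negMulLog_sub_negMulLog_le {p q : ℝ} (hp : 0 ≤ p) (hq : 0 ≤ q) (hp1 : p ≤ 1)
    (hpq : |p - q| ≤ 1 / 2) : negMulLog q - negMulLog p ≤ negMulLog |p - q| := by
  -- increments of the concave `η` over intervals of length `δ` are largest on `[0, δ]` and
  -- smallest on `[1 - δ, 1]`
  rcases le_total p q with h | h
  · have := concaveOn_negMulLog.map_add_sub_map_le_of_le (le_refl (0 : ℝ))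
      (show p + (q - p) ∈ Set.Ici 0 by simpa using hq) hp (sub_nonneg.2 h)
    rw [abs_sub_comm, abs_of_nonneg (sub_nonneg.2 h)]
    simpa using this
  · have hmono := concaveOn_negMulLog.map_add_sub_map_le_of_le (Set.mem_Ici.2 hq)
      (show 1 - (p - q) + (p - q) ∈ Set.Ici 0 by simp) (by linarith) (sub_nonneg.2 h)
    rw [abs_of_nonneg (sub_nonneg.2 h)] at hpq ⊢
    have := negMulLog_one_sub_le (sub_nonneg.2 h) hpq
    simp only [sub_add_cancel, negMulLog_one, add_sub_cancel] at hmono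
    linarith

lemma sum_negMulLog_le {ι : Type*} (s : Finset ι) {f : ι → ℝ} (hf : ∀ i ∈ s, 0 ≤ f i) :
    ∑ i ∈ s, negMulLog (f i) ≤ (∑ i ∈ s, f i) * log #s + negMulLog (∑ i ∈ s, f i) := by
  rcases s.eq_empty_or_nonempty with rfl | hs
  · simp
  have hn : (0 : ℝ) < #s := by exact_mod_cast hs.card_pos
  have hjensen := concaveOn_negMulLog.le_map_sum (t := s) (w := fun _ => (#s : ℝ)⁻¹) (p := f)
    (fun _ _ => inv_nonneg.2 hn.le) (by simp [hn.ne']) hf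
  simp only [smul_eq_mul, ← mul_sum] at hjensen
  have := mul_le_mul_of_nonneg_left hjensen hn.le
  rw [← mul_assoc, mul_inv_cancel₀ hn.ne', one_mul] at this
  refine this.trans_eq ?_
  rcases (sum_nonneg hf).eq_or_lt with h0 | hpos
  · simp [← h0]
  simp only [negMulLog, log_mul (inv_pos.2 hn).ne' hpos.ne', log_inv]
  field_simp
  ring

lemma abs_le_half_sum_abs_of_sum_eq_zero {ι : Type*} [DecidableEq ι] {s : Finset ι} {f : ι → ℝ}
    (hf : ∑ j ∈ s, f j = 0) {i : ι} (hi : i ∈ s) : |f i| ≤ (∑ j ∈ s, |f j|) / 2 := by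
  have hrest : ∑ j ∈ s.erase i, f j = -f i := by
    rw [← add_sum_erase s f hi] at hf; linarith
  have hrest_abs := abs_sum_le_sum_abs f (s.erase i)
  rw [hrest, abs_neg] at hrest_abs
  rw [← add_sum_erase s (fun j => |f j|) hi]
  linarith

lemma concaveOn_mul_add_negMulLog (c : ℝ) :
    ConcaveOn ℝ (Set.Ici 0) (fun t => t * c + negMulLog t) :=
  (((LinearMap.mul ℝ ℝ).flip c).concaveOn (convex_Ici 0)).add concaveOn_negMulLog

lemma sum_abs_sub_le_two {α : Type*} [Fintype α] {P Q : α → ℝ}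
    (hP0 : ∀ x, 0 ≤ P x) (hP1 : ∑ x, P x = 1) (hQ0 : ∀ x, 0 ≤ Q x) (hQ1 : ∑ x, Q x = 1) :
    ∑ x, |P x - Q x| ≤ 2 := by
  calc ∑ x, |P x - Q x| ≤ ∑ x, (P x + Q x) := sum_le_sum fun x _ => by
        rw [abs_le]; constructor <;> linarith [hP0 x, hQ0 x]
    _ = 2 := by rw [sum_add_distrib, hP1, hQ1]; norm_num

theorem sum_negMulLog_sub_sum_negMulLog_le {α : Type*} [Fintype α] {P Q : α → ℝ}
    (hP0 : ∀ x, 0 ≤ P x) (hP1 : ∑ x, P x = 1) (hQ0 : ∀ x, 0 ≤ Q x) (hQ1 : ∑ x, Q x = 1)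
    (hcard : 4 ≤ Fintype.card α) :
    ∑ x, negMulLog (Q x) - ∑ x, negMulLog (P x) ≤
      (∑ x, |P x - Q x|) * log (Fintype.card α) + negMulLog (∑ x, |P x - Q x|) := by
  classical
  set θ := ∑ x, |P x - Q x|
  have hP_le_one (x : α) : P x ≤ 1 := hP1 ▸ single_le_sum (fun i _ => hP0 i) (mem_univ x)
  rcases le_or_gt θ 1 with hθ1 | hθ1
  · have hcoord (x : α) : |P x - Q x| ≤ 1 / 2 :=
      (abs_le_half_sum_abs_of_sum_eq_zero (f := fun x => P x - Q x)
        (by rw [sum_sub_distrib, hP1, hQ1, sub_self]) (mem_univ x)).trans (by linarith)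
    calc ∑ x, negMulLog (Q x) - ∑ x, negMulLog (P x)
        = ∑ x, (negMulLog (Q x) - negMulLog (P x)) := (sum_sub_distrib ..).symm
      _ ≤ ∑ x, negMulLog |P x - Q x| := sum_le_sum fun x _ =>
          negMulLog_sub_negMulLog_le (hP0 x) (hQ0 x) (hP_le_one x) (hcoord x)
      _ ≤ θ * log (Fintype.card α) + negMulLog θ := by
          simpa using sum_negMulLog_le univ fun x _ => abs_nonneg (P x - Q x)
  · have hm4 : (4 : ℝ) ≤ Fintype.card α := by exact_mod_cast hcard
    set m : ℝ := (Fintype.card α : ℝ)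
    have hQ : ∑ x, negMulLog (Q x) ≤ log m := by
      simpa [hQ1] using sum_negMulLog_le univ fun x _ => hQ0 x
    have hP : 0 ≤ ∑ x, negMulLog (P x) :=
      sum_nonneg fun x _ => negMulLog_nonneg (hP0 x) (hP_le_one x)
    have hlog : 2 * log 2 ≤ log m := by
      rw [← log_rpow two_pos]
      exact log_le_log (by positivity) (by norm_num; exact hm4)
    have hmin := (concaveOn_mul_add_negMulLog (log m)).min_le_of_mem_Icc
      (Set.mem_Ici.2 zero_le_one) (Set.mem_Ici.2 zero_le_two)
      ⟨hθ1.le, sum_abs_sub_le_two hP0 hP1 hQ0 hQ1⟩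
    have h12 : 1 * log m + negMulLog 1 ≤ 2 * log m + negMulLog 2 := by
      simp only [negMulLog, log_one]; linarith
    rw [min_eq_left h12] at hmin
    simp only [negMulLog_one] at hmin
    linarith

section RandomVariables

variable {Ω α β : Type} [Fintype Ω] [DecidableEq α] [DecidableEq β] {μ : Ω → ℝ}

lemma distr_nonneg (hμ : ∀ ω, 0 ≤ μ ω) (X : Ω → α) (x : α) : 0 ≤ distr μ X x :=
  sum_nonneg fun ω _ => by split_ifs <;> simp [hμ ω]

lemma sum_distr [Fintype α] (μ : Ω → ℝ) (X : Ω → α) : ∑ x, distr μ X x = ∑ ω, μ ω := by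
  unfold distr
  rw [sum_comm]
  simp

lemma sum_distr_pair [Fintype α] (μ : Ω → ℝ) (X : Ω → α) (Y : Ω → β) (y : β) :
    ∑ x, distr μ (fun ω => (X ω, Y ω)) (x, y) = distr μ Y y := by
  unfold distr
  rw [sum_comm]
  refine sum_congr rfl fun ω _ => ?_
  by_cases h : Y ω = y <;> simp [Prod.ext_iff, h]

lemma distr_pair_eq_mul_condDistr [Fintype α] (hμ : ∀ ω, 0 ≤ μ ω) (X : Ω → α) (Y : Ω → β)
    (x : α) (y : β) :
    distr μ (fun ω => (X ω, Y ω)) (x, y) = distr μ Y y * condDistr μ X Y x y := by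
  unfold condDistr
  split_ifs with hy
  · rw [hy, zero_mul]
    have hsum := sum_distr_pair μ X Y y
    rw [hy] at hsum
    exact (sum_eq_zero_iff_of_nonneg fun x' _ => distr_nonneg hμ _ (x', y)).1 hsum x (mem_univ x)
  · rw [mul_div_cancel₀ _ hy]

lemma condDistr_nonneg (hμ : ∀ ω, 0 ≤ μ ω) (X : Ω → α) (Y : Ω → β) (x : α) (y : β) :
    0 ≤ condDistr μ X Y x y := by
  unfold condDistr
  split_ifs
  · exact le_rfl
  · exact div_nonneg (distr_nonneg hμ _ _) (distr_nonneg hμ Y y)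

lemma sum_condDistr [Fintype α] (X : Ω → α) (Y : Ω → β) {y : β} (hy : distr μ Y y ≠ 0) :
    ∑ x, condDistr μ X Y x y = 1 := by
  simp only [condDistr, if_neg hy, ← sum_div, sum_distr_pair, div_self hy]

lemma ent_eq_sum_negMulLog_div {γ : Type} [Fintype γ] [DecidableEq γ] (μ : Ω → ℝ) (Z : Ω → γ) :
    ent μ Z = (∑ z, negMulLog (distr μ Z z)) / log 2 := by
  simp only [ent, sum_div, ← sum_neg_distrib, negMulLog, logb]
  exact sum_congr rfl fun z _ => by ring

lemma sum_negMulLog_distr_pair [Fintype α] [Fintype β] (hμ : ∀ ω, 0 ≤ μ ω) (X : Ω → α)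
    (Y : Ω → β) :
    ∑ z : α × β, negMulLog (distr μ (fun ω => (X ω, Y ω)) z)
      = ∑ y, negMulLog (distr μ Y y)
        + ∑ y, distr μ Y y * ∑ x, negMulLog (condDistr μ X Y x y) := by
  rw [Fintype.sum_prod_type, sum_comm, ← sum_add_distrib]
  refine sum_congr rfl fun y _ => ?_
  simp only [distr_pair_eq_mul_condDistr hμ, negMulLog_mul, sum_add_distrib, ← sum_mul, ← mul_sum]
  by_cases hy : distr μ Y y = 0
  · simp [hy]
  · rw [sum_condDistr X Y hy, one_mul]

lemma mi_mul_log_two [Fintype α] [Fintype β] (hμ : IsPMF μ) (X : Ω → α) (Y : Ω → β) :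
    mi μ X Y * log 2 = ∑ y, distr μ Y y *
      (∑ x, negMulLog (distr μ X x) - ∑ x, negMulLog (condDistr μ X Y x y)) := by
  have hlog2 : log 2 ≠ 0 := (log_pos one_lt_two).ne'
  simp only [mi, ent_eq_sum_negMulLog_div, sum_negMulLog_distr_pair hμ.1, mul_sub, sum_sub_distrib,
    ← sum_mul, sum_distr, hμ.2, one_mul]
  field_simp
  ring

lemma mi_mul_log_two_le [Fintype α] [Fintype β] (hμ : IsPMF μ) (X : Ω → α) (Y : Ω → β)
    (hcard : 4 ≤ Fintype.card α) :
    mi μ X Y * log 2 ≤ sdCond μ X Y * log (Fintype.card α) + negMulLog (sdCond μ X Y) := by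
  set g : ℝ → ℝ := fun t => t * log (Fintype.card α) + negMulLog t
  set θ : β → ℝ := fun y => ∑ x, |condDistr μ X Y x y - distr μ X x|
  have hPX : ∑ x, distr μ X x = 1 := (sum_distr μ X).trans hμ.2
  have hPY : ∑ y, distr μ Y y = 1 := (sum_distr μ Y).trans hμ.2
  have hcond (y : β) : distr μ Y y * (∑ x, negMulLog (distr μ X x)
      - ∑ x, negMulLog (condDistr μ X Y x y)) ≤ distr μ Y y * g (θ y) := by
    rcases (distr_nonneg hμ.1 Y y).eq_or_lt with hy | hy
    · simp [← hy]
    exact mul_le_mul_of_nonneg_left (sum_negMulLog_sub_sum_negMulLog_le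
      (condDistr_nonneg hμ.1 X Y · y) (sum_condDistr X Y hy.ne') (distr_nonneg hμ.1 X) hPX hcard)
      hy.le
  calc mi μ X Y * log 2
      = ∑ y, distr μ Y y * (∑ x, negMulLog (distr μ X x)
          - ∑ x, negMulLog (condDistr μ X Y x y)) := mi_mul_log_two hμ X Y
    _ ≤ ∑ y, distr μ Y y * g (θ y) := sum_le_sum fun y _ => hcond y
    _ ≤ g (∑ y, distr μ Y y * θ y) := by
      simpa only [smul_eq_mul] using (concaveOn_mul_add_negMulLog _).le_map_sum
        (fun y _ => distr_nonneg hμ.1 Y y) hPY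
        fun y _ => Set.mem_Ici.2 (sum_nonneg fun x _ => abs_nonneg _)

end RandomVariables

/-- upper bound of the Csiszár lemma: for finite `X, Y` with `|𝒳| ≥ 4`
and `d = SD(X|Y;X)`, one has `I(X;Y) ≤ d · log₂(|𝒳|/d)` (the bound being `0` when `d = 0`). -/
theorem stmt6 {Ω α β : Type} [Fintype Ω] [Fintype α] [DecidableEq α]
    [Fintype β] [DecidableEq β]
    (μ : Ω → ℝ) (hμ : IsPMF μ) (X : Ω → α) (Y : Ω → β)
    (hcard : 4 ≤ Fintype.card α) :
    mi μ X Y ≤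
      if sdCond μ X Y = 0 then 0
      else sdCond μ X Y * Real.logb 2 ((Fintype.card α : ℝ) / sdCond μ X Y) := by
  have hm : (Fintype.card α : ℝ) ≠ 0 := by exact_mod_cast (by omega : Fintype.card α ≠ 0)
  have hmi := mi_mul_log_two_le hμ X Y hcard
  rw [← le_div_iff₀ (log_pos one_lt_two)] at hmi
  refine hmi.trans_eq ?_
  split_ifs with hd
  · simp [hd]
  · simp only [logb, negMulLog, log_div hm hd]
    ring
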